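/- Let 𝒱 ⊂ ℝ be a finite set, 𝒲 ⊆ 𝒱 nonempty with p = |𝒲| and q = |𝒱 ∖ 𝒲| ≥ 1. Let the training set be T = {(v₁,v₂) ∈ 𝒱² : v₁ ∈ 𝒲 or v₂ ∈ 𝒲} with targets y(v₁,v₂) = v₁ + v₂. Let κ₀, κ₁, κ₂ ∈ ℝ, set δ₁ = κ₁ − κ₀ and δ₂ = κ₂ − κ₀, assume (p−2)δ₁ + δ₂ ≠ 0, and define the kernel K((v₁,v₂),(v₁',v₂')) = κ_k where k = #{i ∈ {1,2} : v_i = v_i'}. Suppose a : T → ℝ is symmetric (a(v₁,v₂) = a(v₂,v₁)) and satisfies Σ_{t'∈T} a(t') K(t,t') = y(t) for all t ∈ T. Then there exists a constant d ∈ ℝ (independent of the test pair) such that for every (v₁,v₂) with v₁, v₂ ∈ 𝒱 ∖ 𝒲, Σ_{t∈T} a(t) K((v₁,v₂), t) = m·(v₁ + v₂) + d, where m = p·δ₁ / ((p−2)δ₁ + δ₂). -/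

import Mathlib

open Finset

/-! The kernel splits as `κ₀ + δ₁ ([s₁ = t₁] + [s₂ = t₂]) + (δ₂ - 2δ₁) [s = t]`, so the prediction
at a pair `s` is `κ₀ Σ a + δ₁ (R s₁ + C s₂) + (δ₂ - 2δ₁) a s [s ∈ T]`, where `R` and `C` are the row
and column sums of `a` over `T`. For `v ∉ 𝒲` the row of `v` in `T` is `{v} × 𝒲`, and summing the
training equations at `(v, w)` over `w ∈ 𝒲` gives `((p - 2)δ₁ + δ₂) R v = p v + c` with `c`
independent of `v`; likewise for columns. A test pair lies outside `T`, so its prediction is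
`κ₀ Σ a + δ₁ (R v₁ + C v₂)`, affine in `v₁ + v₂` with slope `p δ₁ / ((p - 2)δ₁ + δ₂)`. -/

section

variable {α : Type*} [DecidableEq α]

def pairKernel (κ₀ κ₁ κ₂ : ℝ) (s t : α × α) : ℝ :=
  if s.1 = t.1 then (if s.2 = t.2 then κ₂ else κ₁) else (if s.2 = t.2 then κ₁ else κ₀)

lemma mul_pairKernel (κ₀ κ₁ κ₂ x : ℝ) (s t : α × α) :
    x * pairKernel κ₀ κ₁ κ₂ s t
      = κ₀ * x + (κ₁ - κ₀) * ((if t.1 = s.1 then x else 0) + (if t.2 = s.2 then x else 0))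
        + (κ₂ - 2 * κ₁ + κ₀) * (if t = s then x else 0) := by
  rcases s with ⟨s₁, s₂⟩
  rcases t with ⟨t₁, t₂⟩
  by_cases h₁ : t₁ = s₁ <;> by_cases h₂ : t₂ = s₂ <;>
    simp [pairKernel, h₁, h₂, eq_comm (a := s₁), eq_comm (a := s₂)] <;> ring

lemma sum_mul_pairKernel (κ₀ κ₁ κ₂ : ℝ) (T : Finset (α × α)) (a : α × α → ℝ) (s : α × α) :
    ∑ t ∈ T, a t * pairKernel κ₀ κ₁ κ₂ s t
      = κ₀ * ∑ t ∈ T, a t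
        + (κ₁ - κ₀) * (∑ t ∈ T with t.1 = s.1, a t + ∑ t ∈ T with t.2 = s.2, a t)
        + (κ₂ - 2 * κ₁ + κ₀) * (if s ∈ T then a s else 0) := by
  simp only [mul_pairKernel, sum_add_distrib, ← mul_sum, sum_filter, sum_ite_eq']

def trainingSet (V W : Finset α) : Finset (α × α) :=
  (V ×ˢ V).filter fun t => t.1 ∈ W ∨ t.2 ∈ W

variable {V W : Finset α}

lemma mem_trainingSet {t : α × α} :
    t ∈ trainingSet V W ↔ t.1 ∈ V ∧ t.2 ∈ V ∧ (t.1 ∈ W ∨ t.2 ∈ W) := by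
  simp [trainingSet, and_assoc]

lemma mk_notMem_trainingSet {v₁ v₂ : α} (h₁ : v₁ ∉ W) (h₂ : v₂ ∉ W) :
    (v₁, v₂) ∉ trainingSet V W := by
  simp [mem_trainingSet, h₁, h₂]

lemma filter_fst_trainingSet (hWV : W ⊆ V) {v : α} (hv : v ∈ V \ W) :
    {t ∈ trainingSet V W | t.1 = v} = {v} ×ˢ W := by
  rw [mem_sdiff] at hv
  ext ⟨t₁, t₂⟩
  simp only [mem_filter, mem_trainingSet, mem_product, mem_singleton]
  constructor
  · rintro ⟨⟨-, -, h⟩, rfl⟩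
    exact ⟨rfl, h.resolve_left hv.2⟩
  · rintro ⟨rfl, h⟩
    exact ⟨⟨hv.1, hWV h, Or.inr h⟩, rfl⟩

lemma filter_snd_trainingSet (hWV : W ⊆ V) {v : α} (hv : v ∈ V \ W) :
    {t ∈ trainingSet V W | t.2 = v} = W ×ˢ {v} := by
  rw [mem_sdiff] at hv
  ext ⟨t₁, t₂⟩
  simp only [mem_filter, mem_trainingSet, mem_product, mem_singleton]
  constructor
  · rintro ⟨⟨-, -, h⟩, rfl⟩
    exact ⟨h.resolve_right hv.2, rfl⟩
  · rintro ⟨h, rfl⟩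
    exact ⟨⟨hWV h, hv.1, Or.inl h⟩, rfl⟩

end

lemma card_mul_add_mul_sum_eq {W : Finset ℝ} {b g : ℝ → ℝ} {c δ ε v : ℝ}
    (h : ∀ w ∈ W, c + δ * (∑ w' ∈ W, b w' + g w) + ε * b w = v + w) :
    (#W * δ + ε) * ∑ w ∈ W, b w = #W * v + (∑ w ∈ W, w - #W * c - δ * ∑ w ∈ W, g w) := by
  have hsum : ∑ w ∈ W, (c + δ * (∑ w' ∈ W, b w' + g w) + ε * b w) = ∑ w ∈ W, (v + w) :=
    sum_congr rfl h
  rw [sum_add_distrib (f := fun _ => v)] at hsum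
  simp only [sum_add_distrib, sum_const, nsmul_eq_mul, ← mul_sum, mul_add] at hsum
  linear_combination hsum

section

variable {V W : Finset ℝ} {κ₀ κ₁ κ₂ : ℝ} {a : ℝ × ℝ → ℝ}

lemma exists_affine_sum_filter_fst (hWV : W ⊆ V)
    (hinterp : ∀ t ∈ trainingSet V W,
      ∑ t' ∈ trainingSet V W, a t' * pairKernel κ₀ κ₁ κ₂ t t' = t.1 + t.2) :
    ∃ c, ∀ v ∈ V \ W, ((#W - 2) * (κ₁ - κ₀) + (κ₂ - κ₀))
      * ∑ t ∈ trainingSet V W with t.1 = v, a t = #W * v + c := by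
  set T := trainingSet V W
  refine ⟨∑ w ∈ W, w - #W * (κ₀ * ∑ t ∈ T, a t)
    - (κ₁ - κ₀) * ∑ w ∈ W, ∑ t ∈ T with t.2 = w, a t, fun v hv => ?_⟩
  have hrow : ∑ t ∈ T with t.1 = v, a t = ∑ w ∈ W, a (v, w) := by
    rw [filter_fst_trainingSet hWV hv, sum_product, sum_singleton]
  have htrain : ∀ w ∈ W, κ₀ * ∑ t ∈ T, a t
      + (κ₁ - κ₀) * (∑ w' ∈ W, a (v, w') + ∑ t ∈ T with t.2 = w, a t)
      + (κ₂ - 2 * κ₁ + κ₀) * a (v, w) = v + w := by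
    intro w hw
    have hmem : (v, w) ∈ T := mem_trainingSet.2 ⟨(mem_sdiff.1 hv).1, hWV hw, Or.inr hw⟩
    have := hinterp (v, w) hmem
    rw [sum_mul_pairKernel, if_pos hmem, hrow] at this
    linear_combination this
  rw [hrow]
  linear_combination card_mul_add_mul_sum_eq htrain

lemma exists_affine_sum_filter_snd (hWV : W ⊆ V)
    (hinterp : ∀ t ∈ trainingSet V W,
      ∑ t' ∈ trainingSet V W, a t' * pairKernel κ₀ κ₁ κ₂ t t' = t.1 + t.2) :
    ∃ c, ∀ v ∈ V \ W, ((#W - 2) * (κ₁ - κ₀) + (κ₂ - κ₀))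
      * ∑ t ∈ trainingSet V W with t.2 = v, a t = #W * v + c := by
  set T := trainingSet V W
  refine ⟨∑ w ∈ W, w - #W * (κ₀ * ∑ t ∈ T, a t)
    - (κ₁ - κ₀) * ∑ w ∈ W, ∑ t ∈ T with t.1 = w, a t, fun v hv => ?_⟩
  have hcol : ∑ t ∈ T with t.2 = v, a t = ∑ w ∈ W, a (w, v) := by
    rw [filter_snd_trainingSet hWV hv, sum_product_right, sum_singleton]
  have htrain : ∀ w ∈ W, κ₀ * ∑ t ∈ T, a t
      + (κ₁ - κ₀) * (∑ w' ∈ W, a (w', v) + ∑ t ∈ T with t.1 = w, a t)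
      + (κ₂ - 2 * κ₁ + κ₀) * a (w, v) = v + w := by
    intro w hw
    have hmem : (w, v) ∈ T := mem_trainingSet.2 ⟨hWV hw, (mem_sdiff.1 hv).1, Or.inl hw⟩
    have := hinterp (w, v) hmem
    rw [sum_mul_pairKernel, if_pos hmem, hcol] at this
    linear_combination this
  rw [hcol]
  linear_combination card_mul_add_mul_sum_eq htrain

end

theorem symbolic_addition_affine_form_general
    (V W : Finset ℝ) (hWV : W ⊆ V)
    (p : ℕ) (hp : p = W.card)
    (κ₀ κ₁ κ₂ δ₁ δ₂ : ℝ) (hδ₁ : δ₁ = κ₁ - κ₀) (hδ₂ : δ₂ = κ₂ - κ₀)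
    (hden : ((p : ℝ) - 2) * δ₁ + δ₂ ≠ 0)
    (K : ℝ × ℝ → ℝ × ℝ → ℝ)
    (hK : ∀ s t : ℝ × ℝ, K s t =
      if s.1 = t.1 then (if s.2 = t.2 then κ₂ else κ₁)
      else (if s.2 = t.2 then κ₁ else κ₀))
    (T : Finset (ℝ × ℝ)) (hT : T = (V ×ˢ V).filter fun t => t.1 ∈ W ∨ t.2 ∈ W)
    (a : ℝ × ℝ → ℝ)
    (hinterp : ∀ t ∈ T, ∑ t' ∈ T, a t' * K t t' = t.1 + t.2) :
    ∃ d : ℝ, ∀ v₁ ∈ V \ W, ∀ v₂ ∈ V \ W,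
      ∑ t ∈ T, a t * K (v₁, v₂) t
        = ((p : ℝ) * δ₁ / (((p : ℝ) - 2) * δ₁ + δ₂)) * (v₁ + v₂) + d := by
  obtain rfl : K = pairKernel κ₀ κ₁ κ₂ := funext₂ hK
  obtain rfl : T = trainingSet V W := hT
  subst hp hδ₁ hδ₂
  set D := ((#W : ℝ) - 2) * (κ₁ - κ₀) + (κ₂ - κ₀)
  obtain ⟨c₁, hc₁⟩ := exists_affine_sum_filter_fst hWV hinterp
  obtain ⟨c₂, hc₂⟩ := exists_affine_sum_filter_snd hWV hinterp
  refine ⟨κ₀ * ∑ t ∈ trainingSet V W, a t + (κ₁ - κ₀) * (c₁ + c₂) / D, fun v₁ h₁ v₂ h₂ => ?_⟩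
  rw [sum_mul_pairKernel, if_neg (mk_notMem_trainingSet (mem_sdiff.1 h₁).2 (mem_sdiff.1 h₂).2)]
  field_simp
  linear_combination (κ₁ - κ₀) * (hc₁ v₁ h₁ + hc₂ v₂ h₂)

/-- Intermediate affine form in the proof of Proposition 2: without the
zero-mean assumptions, the test-set prediction is m·(v₁+v₂) + d for a
constant d independent of the test pair, with m = p·δ₁ / ((p−2)δ₁ + δ₂). -/
theorem symbolic_addition_affine_form
    (V W : Finset ℝ) (hWV : W ⊆ V) (hWne : W.Nonempty)
    (p q : ℕ) (hp : p = W.card) (hq : q = (V \ W).card) (hq1 : 1 ≤ q)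
    (κ₀ κ₁ κ₂ δ₁ δ₂ : ℝ) (hδ₁ : δ₁ = κ₁ - κ₀) (hδ₂ : δ₂ = κ₂ - κ₀)
    (hden : ((p : ℝ) - 2) * δ₁ + δ₂ ≠ 0)
    (K : ℝ × ℝ → ℝ × ℝ → ℝ)
    (hK : ∀ s t : ℝ × ℝ, K s t =
      if s.1 = t.1 then (if s.2 = t.2 then κ₂ else κ₁)
      else (if s.2 = t.2 then κ₁ else κ₀))
    (T : Finset (ℝ × ℝ)) (hT : T = (V ×ˢ V).filter fun t => t.1 ∈ W ∨ t.2 ∈ W)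
    (a : ℝ × ℝ → ℝ) (hsym : ∀ v₁ v₂ : ℝ, a (v₁, v₂) = a (v₂, v₁))
    (hinterp : ∀ t ∈ T, ∑ t' ∈ T, a t' * K t t' = t.1 + t.2) :
    ∃ d : ℝ, ∀ v₁ ∈ V \ W, ∀ v₂ ∈ V \ W,
      ∑ t ∈ T, a t * K (v₁, v₂) t
        = ((p : ℝ) * δ₁ / (((p : ℝ) - 2) * δ₁ + δ₂)) * (v₁ + v₂) + d :=
  symbolic_addition_affine_form_general V W hWV p hp κ₀ κ₁ κ₂ δ₁ δ₂ hδ₁ hδ₂ hden K hK T hT a hinterp
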